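/- arXiv:2401.13144 — 2 statements merged into one kernel-verified Lean document; each statement's English description precedes it below -/
import Mathlib

section
/- Let Q : ℝ₊^{m+1} → ℝ be measurable and homogeneous of degree −m, and let p₁,…,pₘ ∈ [1,∞) with Θ_m(p₁,…,pₘ) < ∞, and set 1/p = ∑_{j=1}^m 1/pⱼ with p ≥ 1. Then for all fⱼ ∈ L^{pⱼ}(ℝ₊), the multilinear operator M(f₁,…,fₘ)(x) = ∫_{ℝ₊^m} Q(x,x₁,…,xₘ) f₁(x₁)⋯fₘ(xₘ) dx₁⋯dxₘ is well-defined a.e. and satisfies ‖M(f₁,…,fₘ)‖_{L^p(ℝ₊)} ≤ Θ_m(p₁,…,pₘ) · ∏_{j=1}^m ‖fⱼ‖_{L^{pⱼ}(ℝ₊)}. -/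
/-!
For `x > 0` the substitution `xs = x • y` and the homogeneity of `Q` turn the inner integral
into `∫ |Q(1,y)| ∏ fⱼ(x yⱼ) dy`. Against the measure `ν = |Q(1,y)| ∏ yⱼ^{-1/pⱼ} dy`, whose total
mass is `Θ`, this is `∫ ∏ Gⱼ(x,y) dν` with `Gⱼ(x,y) = yⱼ^{1/pⱼ} |fⱼ(x yⱼ)|`. Hölder in `y` (exponents
`1 - 1/q` and `1/pⱼ`) followed by Hölder in `x` (exponents `q/pⱼ`, which sum to `1`) bounds its
`L^q` norm by `Θ^{1-1/q} ∏ⱼ (∫∫ Gⱼ^{pⱼ} dx dν)^{1/pⱼ}`, and since Lebesgue measure on `ℝ₊` scales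
like `dx`, `∫ Gⱼ(x,y)^{pⱼ} dx = ‖fⱼ‖_{pⱼ}^{pⱼ}` for every `y > 0`.
-/

open MeasureTheory ENNReal Set

/-- Lebesgue measure restricted to `(0,∞)`. -/
noncomputable def muHalf : Measure ℝ := (volume : Measure ℝ).restrict (Ioi 0)

/-- The product measure on `ℝ₊^m`. -/
noncomputable def piHalf (m : ℕ) : Measure (Fin m → ℝ) :=
  Measure.pi fun _ => muHalf

/-- `Θ_m(p⃗) = ∫_{ℝ₊^m} |Q(1,x⃗)| ∏ xⱼ^{-1/pⱼ} dx⃗`. -/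
noncomputable def Theta (m : ℕ) (Q : ℝ → (Fin m → ℝ) → ℝ) (p : Fin m → ℝ) : ℝ≥0∞ :=
  ∫⁻ xs, ENNReal.ofReal (|Q 1 xs| * ∏ j, (xs j) ^ (-(1 / p j))) ∂(piHalf m)

theorem ENNReal.rpow_sum_of_nonneg {ι : Type*} (a : ℝ≥0∞) (s : Finset ι) {e : ι → ℝ}
    (he : ∀ i ∈ s, 0 ≤ e i) : a ^ (∑ i ∈ s, e i) = ∏ i ∈ s, a ^ e i := by
  classical
  induction s using Finset.induction_on with
  | empty => simp
  | insert i s hi ih =>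
    rw [Finset.sum_insert hi, Finset.prod_insert hi,
      rpow_add_of_nonneg _ _ (he i (by simp)) (Finset.sum_nonneg fun j hj => he j (by simp [hj])),
      ih fun j hj => he j (by simp [hj])]

theorem ENNReal.lintegral_prod_rpow_le {α ι : Type*} [MeasurableSpace α] {μ : Measure α}
    (s : Finset ι) {f : ι → α → ℝ≥0∞} (hf : ∀ i ∈ s, AEMeasurable (f i) μ) {p : ι → ℝ} {q : ℝ}
    (hq : 0 < q) (hp : ∀ i ∈ s, 0 < p i) (hpq : 1 / q = ∑ i ∈ s, 1 / p i) :
    (∫⁻ a, (∏ i ∈ s, f i a) ^ q ∂μ) ^ (1 / q) ≤ ∏ i ∈ s, (∫⁻ a, f i a ^ p i ∂μ) ^ (1 / p i) := by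
  have hsum : ∑ i ∈ s, q / p i = 1 := by
    simp_rw [div_eq_mul_one_div q, ← Finset.mul_sum, ← hpq, mul_one_div_cancel hq.ne']
  have hholder : ∫⁻ a, (∏ i ∈ s, f i a) ^ q ∂μ ≤ ∏ i ∈ s, (∫⁻ a, f i a ^ p i ∂μ) ^ (q / p i) := by
    calc ∫⁻ a, (∏ i ∈ s, f i a) ^ q ∂μ = ∫⁻ a, ∏ i ∈ s, (f i a ^ p i) ^ (q / p i) ∂μ := by
          refine lintegral_congr fun a => ?_
          rw [← prod_rpow_of_nonneg hq.le]
          refine Finset.prod_congr rfl fun i hi => ?_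
          rw [← rpow_mul, mul_div_cancel₀ _ (hp i hi).ne']
      _ ≤ _ := lintegral_prod_norm_pow_le s (fun i hi => (hf i hi).pow_const _) hsum
          fun i hi => div_nonneg hq.le (hp i hi).le
  calc _ ≤ (∏ i ∈ s, (∫⁻ a, f i a ^ p i ∂μ) ^ (q / p i)) ^ (1 / q) :=
        rpow_le_rpow hholder (by positivity)
    _ = _ := by
        rw [← prod_rpow_of_nonneg (by positivity)]
        refine Finset.prod_congr rfl fun i hi => ?_
        rw [← rpow_mul, div_mul_div_comm, mul_one, mul_comm, ← div_div, div_self hq.ne']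

theorem ENNReal.lintegral_rpow_lintegral_prod_le {X Y ι : Type*} [MeasurableSpace X]
    [MeasurableSpace Y] [Fintype ι] {μ : Measure X} {ν : Measure Y} [SFinite μ] [SFinite ν]
    {G : ι → X → Y → ℝ≥0∞} (hG : ∀ i, Measurable (Function.uncurry (G i))) {p : ι → ℝ} {q : ℝ}
    (hq : 1 ≤ q) (hp : ∀ i, 0 < p i) (hpq : 1 / q = ∑ i, 1 / p i) :
    (∫⁻ x, (∫⁻ y, ∏ i, G i x y ∂ν) ^ q ∂μ) ^ (1 / q) ≤
      ν univ ^ (1 - 1 / q) * ∏ i, (∫⁻ y, ∫⁻ x, G i x y ^ p i ∂μ ∂ν) ^ (1 / p i) := by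
  have hq0 : 0 < q := zero_lt_one.trans_le hq
  set A : ι → X → ℝ≥0∞ := fun i x => (∫⁻ y, G i x y ^ p i ∂ν) ^ (1 / p i)
  have hA : ∀ i, Measurable (A i) := fun i =>
    (((hG i).pow_const _).lintegral_prod_right').pow_const _
  have hpointwise : ∀ x, ∫⁻ y, ∏ i, G i x y ∂ν ≤ ν univ ^ (1 - 1 / q) * ∏ i, A i x := by
    intro x
    have := lintegral_mul_prod_norm_pow_le (μ := ν) Finset.univ (g := fun _ => 1)
      (f := fun i y => G i x y ^ p i) aemeasurable_const
      (fun i _ => (((hG i).comp measurable_prodMk_left).pow_const _).aemeasurable)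
      (1 - 1 / q) (p := fun i => 1 / p i) (by rw [← hpq]; ring)
      (sub_nonneg.2 ((div_le_one hq0).2 hq)) (fun i _ => (one_div_pos.2 (hp i)).le)
    have hpinv : ∀ i, p i * (p i)⁻¹ = 1 := fun i => mul_inv_cancel₀ (hp i).ne'
    simpa [← rpow_mul, hpinv, A] using this
  calc (∫⁻ x, (∫⁻ y, ∏ i, G i x y ∂ν) ^ q ∂μ) ^ (1 / q)
      ≤ (∫⁻ x, (ν univ ^ (1 - 1 / q) * ∏ i, A i x) ^ q ∂μ) ^ (1 / q) := by
        gcongr with x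
        exact hpointwise x
    _ = ν univ ^ (1 - 1 / q) * (∫⁻ x, (∏ i, A i x) ^ q ∂μ) ^ (1 / q) := by
        simp_rw [mul_rpow_of_nonneg _ _ hq0.le]
        rw [lintegral_const_mul _ ((Finset.measurable_prod _ fun i _ => hA i).pow_const _),
          mul_rpow_of_nonneg _ _ (by positivity), ← rpow_mul, mul_one_div_cancel hq0.ne', rpow_one]
    _ ≤ ν univ ^ (1 - 1 / q) * ∏ i, (∫⁻ x, A i x ^ p i ∂μ) ^ (1 / p i) := by
        gcongr
        exact lintegral_prod_rpow_le _ (fun i _ => (hA i).aemeasurable) hq0 (fun i _ => hp i) hpq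
    _ = _ := by
        simp only [A, ← rpow_mul, one_div_mul_cancel (hp _).ne', rpow_one]
        congr 1
        refine Finset.prod_congr rfl fun i _ => ?_
        rw [lintegral_lintegral_swap (μ := μ) (ν := ν) (f := fun x y => G i x y ^ p i)
          ((hG i).pow_const _).aemeasurable]

instance : SigmaFinite muHalf := by unfold muHalf; infer_instance

instance (m : ℕ) : SigmaFinite (piHalf m) := by unfold piHalf; infer_instance

lemma ae_pos_muHalf : ∀ᵐ x ∂muHalf, 0 < x := ae_restrict_mem measurableSet_Ioi

lemma ae_pos_piHalf (m : ℕ) : ∀ᵐ y ∂piHalf m, ∀ j, 0 < y j :=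
  ae_all_iff.2 fun _ => Measure.tendsto_eval_ae_ae.eventually ae_pos_muHalf

lemma ofReal_mul_muHalf_preimage_const_mul {c : ℝ} (hc : 0 < c) (s : Set ℝ) :
    ENNReal.ofReal c * muHalf ((c * ·) ⁻¹' s) = muHalf s := by
  have hIoi : (c * ·) ⁻¹' s ∩ Ioi 0 = (c * ·) ⁻¹' (s ∩ Ioi 0) := by
    ext t; simp [mul_pos_iff_of_pos_left hc]
  rw [muHalf, Measure.restrict_apply' measurableSet_Ioi, Measure.restrict_apply' measurableSet_Ioi,
    hIoi, Real.volume_preimage_mul_left hc.ne', ← mul_assoc, ← ofReal_mul hc.le,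
    abs_of_pos (inv_pos.2 hc), mul_inv_cancel₀ hc.ne', ofReal_one, one_mul]

lemma muHalf_eq_smul_map_const_mul {c : ℝ} (hc : 0 < c) :
    muHalf = ENNReal.ofReal c • muHalf.map (c * ·) := by
  ext s hs
  rw [Measure.smul_apply, Measure.map_apply (measurable_const_mul c) hs, smul_eq_mul,
    ofReal_mul_muHalf_preimage_const_mul hc]

lemma piHalf_eq_smul_map_const_mul (m : ℕ) {c : ℝ} (hc : 0 < c) :
    piHalf m = ENNReal.ofReal c ^ m • (piHalf m).map (fun y j => c * y j) := by
  rw [piHalf]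
  refine Measure.pi_eq fun s hs => ?_
  have hpre : (fun y : Fin m → ℝ => fun j => c * y j) ⁻¹' univ.pi s
      = univ.pi fun j => (c * ·) ⁻¹' s j := by
    ext y; simp
  rw [Measure.smul_apply, Measure.map_apply (by fun_prop) (.univ_pi hs), smul_eq_mul, hpre,
    Measure.pi_pi]
  calc ENNReal.ofReal c ^ m * ∏ j, muHalf ((c * ·) ⁻¹' s j)
      = ∏ j, ENNReal.ofReal c * muHalf ((c * ·) ⁻¹' s j) := by
        rw [Finset.prod_mul_distrib, Finset.prod_const, Finset.card_univ, Fintype.card_fin]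
    _ = ∏ j, muHalf (s j) :=
        Finset.prod_congr rfl fun j _ => ofReal_mul_muHalf_preimage_const_mul hc (s j)

lemma lintegral_muHalf_eq_mul_lintegral_comp_const_mul {c : ℝ} (hc : 0 < c) {g : ℝ → ℝ≥0∞}
    (hg : Measurable g) :
    ∫⁻ t, g t ∂muHalf = ENNReal.ofReal c * ∫⁻ t, g (c * t) ∂muHalf := by
  conv_lhs => rw [muHalf_eq_smul_map_const_mul hc]
  rw [lintegral_smul_measure, lintegral_map hg (measurable_const_mul c), smul_eq_mul]

lemma lintegral_piHalf_eq_mul_lintegral_comp_const_mul (m : ℕ) {c : ℝ} (hc : 0 < c)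
    {g : (Fin m → ℝ) → ℝ≥0∞} (hg : Measurable g) :
    ∫⁻ y, g y ∂piHalf m = ENNReal.ofReal c ^ m * ∫⁻ y, g (fun j => c * y j) ∂piHalf m := by
  conv_lhs => rw [piHalf_eq_smul_map_const_mul m hc]
  rw [lintegral_smul_measure, lintegral_map hg (by fun_prop), smul_eq_mul]

section Homogeneous

variable {m : ℕ} {Q : ℝ → (Fin m → ℝ) → ℝ}

lemma theta_eq_lintegral (p : Fin m → ℝ) :
    Theta m Q p = ∫⁻ y, ‖Q 1 y‖ₑ * ∏ j, ENNReal.ofReal (y j) ^ (-(1 / p j)) ∂piHalf m := by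
  refine lintegral_congr_ae ?_
  filter_upwards [ae_pos_piHalf m] with y hy
  rw [ENNReal.ofReal_mul (abs_nonneg _), ← Real.enorm_eq_ofReal_abs,
    ENNReal.ofReal_prod_of_nonneg fun j _ => Real.rpow_nonneg (hy j).le _]
  simp_rw [ENNReal.ofReal_rpow_of_pos (hy _)]

lemma lintegral_enorm_mul_eq_lintegral_comp_dilation
    (hQmeas : Measurable (fun z : ℝ × (Fin m → ℝ) => Q z.1 z.2))
    (hhom : ∀ δ > (0:ℝ), ∀ x > (0:ℝ), ∀ xs : Fin m → ℝ, (∀ j, 0 < xs j) →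
      Q (δ * x) (fun j => δ * xs j) = δ ^ (-(m:ℝ)) * Q x xs)
    {H : (Fin m → ℝ) → ℝ≥0∞} (hH : Measurable H) {x : ℝ} (hx : 0 < x) :
    ∫⁻ xs, ‖Q x xs‖ₑ * H xs ∂piHalf m = ∫⁻ y, ‖Q 1 y‖ₑ * H (fun j => x * y j) ∂piHalf m := by
  have hQx : Measurable (Q x) := hQmeas.comp measurable_prodMk_left
  rw [lintegral_piHalf_eq_mul_lintegral_comp_const_mul m hx (by fun_prop),
    ← lintegral_const_mul' _ _ (pow_ne_top ofReal_ne_top)]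
  refine lintegral_congr_ae ?_
  filter_upwards [ae_pos_piHalf m] with y hy
  have hQ : Q x (fun j => x * y j) = x ^ (-(m:ℝ)) * Q 1 y := by
    simpa using hhom x hx 1 one_pos y hy
  have hscale : ENNReal.ofReal x ^ m * ‖x ^ (-(m:ℝ))‖ₑ = 1 := by
    rw [Real.enorm_of_nonneg (by positivity), ← ofReal_pow hx.le, ← ofReal_mul (by positivity),
      Real.rpow_neg hx.le, Real.rpow_natCast, mul_inv_cancel₀ (by positivity), ofReal_one]
  rw [hQ, enorm_mul, ← mul_assoc, ← mul_assoc, hscale, one_mul]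

theorem lintegral_rpow_lintegral_enorm_le
    (hQmeas : Measurable (fun z : ℝ × (Fin m → ℝ) => Q z.1 z.2))
    (hhom : ∀ δ > (0:ℝ), ∀ x > (0:ℝ), ∀ xs : Fin m → ℝ, (∀ j, 0 < xs j) →
      Q (δ * x) (fun j => δ * xs j) = δ ^ (-(m:ℝ)) * Q x xs)
    {p : Fin m → ℝ} (hp : ∀ j, 0 < p j) {q : ℝ} (hq : 1 ≤ q) (hqp : 1 / q = ∑ j, 1 / p j)
    {F : Fin m → ℝ → ℝ≥0∞} (hF : ∀ j, Measurable (F j)) :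
    (∫⁻ x, (∫⁻ xs, ‖Q x xs‖ₑ * ∏ j, F j (xs j) ∂piHalf m) ^ q ∂muHalf) ^ (1 / q)
      ≤ Theta m Q p * ∏ j, (∫⁻ t, F j t ^ p j ∂muHalf) ^ (1 / p j) := by
  have hQ1 : Measurable (Q 1) := hQmeas.comp measurable_prodMk_left
  set w : (Fin m → ℝ) → ℝ≥0∞ := fun y => ∏ j, ENNReal.ofReal (y j) ^ (-(1 / p j))
  set ν := (piHalf m).withDensity fun y => ‖Q 1 y‖ₑ * w y
  set G : Fin m → ℝ → (Fin m → ℝ) → ℝ≥0∞ :=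
    fun j x y => ENNReal.ofReal (y j) ^ (1 / p j) * F j (x * y j)
  have hG : ∀ j, Measurable (Function.uncurry (G j)) := fun j => by
    have := hF j
    simp only [G, Function.uncurry_def]
    fun_prop
  have hν : ν univ = Theta m Q p := by
    rw [withDensity_apply _ MeasurableSet.univ, Measure.restrict_univ, theta_eq_lintegral]
  have hinner : ∀ x, 0 < x →
      ∫⁻ xs, ‖Q x xs‖ₑ * ∏ j, F j (xs j) ∂piHalf m = ∫⁻ y, ∏ j, G j x y ∂ν := by
    intro x hx
    rw [lintegral_enorm_mul_eq_lintegral_comp_dilation hQmeas hhom (by fun_prop) hx,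
      lintegral_withDensity_eq_lintegral_mul _ (by fun_prop) (by fun_prop)]
    refine lintegral_congr_ae ?_
    filter_upwards [ae_pos_piHalf m] with y hy
    have hy0 : ∀ j, ENNReal.ofReal (y j) ≠ 0 := fun j => by simpa using hy j
    simp only [Pi.mul_apply, w, G, mul_assoc, ← Finset.prod_mul_distrib]
    congr 1
    refine Finset.prod_congr rfl fun j _ => ?_
    rw [← mul_assoc, ← rpow_add _ _ (hy0 j) ofReal_ne_top, neg_add_cancel, rpow_zero, one_mul]
  have houter : ∀ j, ∫⁻ y, ∫⁻ x, G j x y ^ p j ∂muHalf ∂ν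
      = Theta m Q p * ∫⁻ t, F j t ^ p j ∂muHalf := by
    intro j
    rw [← hν, mul_comm, ← lintegral_const]
    refine lintegral_congr_ae ?_
    filter_upwards [(withDensity_absolutelyContinuous _ _).ae_le (ae_pos_piHalf m)] with y hy
    rw [lintegral_muHalf_eq_mul_lintegral_comp_const_mul (hy j) ((hF j).pow_const _),
      ← lintegral_const_mul' _ _ ofReal_ne_top]
    refine lintegral_congr fun x => ?_
    rw [mul_rpow_of_nonneg _ _ (hp j).le, ← rpow_mul, one_div_mul_cancel (hp j).ne', rpow_one,
      mul_comm x]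
  calc (∫⁻ x, (∫⁻ xs, ‖Q x xs‖ₑ * ∏ j, F j (xs j) ∂piHalf m) ^ q ∂muHalf) ^ (1 / q)
      = (∫⁻ x, (∫⁻ y, ∏ j, G j x y ∂ν) ^ q ∂muHalf) ^ (1 / q) := by
        congr 1
        exact lintegral_congr_ae (ae_pos_muHalf.mono fun x hx => by simp only [hinner x hx])
    _ ≤ ν univ ^ (1 - 1 / q) * ∏ j, (∫⁻ y, ∫⁻ x, G j x y ^ p j ∂muHalf ∂ν) ^ (1 / p j) :=
        lintegral_rpow_lintegral_prod_le hG hq hp hqp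
    _ = Theta m Q p * ∏ j, (∫⁻ t, F j t ^ p j ∂muHalf) ^ (1 / p j) := by
        simp only [houter, hν, mul_rpow_of_nonneg _ _ (one_div_pos.2 (hp _)).le,
          Finset.prod_mul_distrib]
        rw [← rpow_sum_of_nonneg _ _ fun j _ => (one_div_pos.2 (hp j)).le, ← hqp, ← mul_assoc,
          ← rpow_add_of_nonneg _ _ ?_ (one_div_pos.2 (zero_lt_one.trans_le hq)).le, sub_add_cancel,
          rpow_one]
        exact sub_nonneg.2 ((div_le_one (zero_lt_one.trans_le hq)).2 hq)

end Homogeneous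

theorem ae_integrable_and_eLpNorm_le_of_measurable (m : ℕ) (Q : ℝ → (Fin m → ℝ) → ℝ)
    (hQmeas : Measurable (fun z : ℝ × (Fin m → ℝ) => Q z.1 z.2))
    (hhom : ∀ δ > (0:ℝ), ∀ x > (0:ℝ), ∀ xs : Fin m → ℝ, (∀ j, 0 < xs j) →
      Q (δ * x) (fun j => δ * xs j) = δ ^ (-(m:ℝ)) * Q x xs)
    (p : Fin m → ℝ) (hp : ∀ j, 0 < p j) (hTheta : Theta m Q p < ∞)
    (q : ℝ) (hq : 1 ≤ q) (hqp : 1 / q = ∑ j, 1 / p j)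
    (f : Fin m → ℝ → ℝ) (hfm : ∀ j, Measurable (f j))
    (hf : ∀ j, MemLp (f j) (ENNReal.ofReal (p j)) muHalf) :
    (∀ᵐ x ∂muHalf, Integrable (fun xs => Q x xs * ∏ j, f j (xs j)) (piHalf m)) ∧
    eLpNorm (fun x => ∫ xs, Q x xs * ∏ j, f j (xs j) ∂(piHalf m))
        (ENNReal.ofReal q) muHalf
      ≤ Theta m Q p * ∏ j, eLpNorm (f j) (ENNReal.ofReal (p j)) muHalf := by
  have hq0 : 0 < q := zero_lt_one.trans_le hq
  set I : ℝ → ℝ≥0∞ := fun x => ∫⁻ xs, ‖Q x xs * ∏ j, f j (xs j)‖ₑ ∂piHalf m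
  have hI : I = fun x => ∫⁻ xs, ‖Q x xs‖ₑ * ∏ j, ‖f j (xs j)‖ₑ ∂piHalf m := by
    simp only [I, enorm_eq_nnnorm, nnnorm_mul, nnnorm_prod, coe_mul, ofNNReal_finsetProd]
  have hImeas : Measurable I := by
    rw [hI]
    exact Measurable.lintegral_prod_right' (f := fun z : ℝ × (Fin m → ℝ) =>
      ‖Q z.1 z.2‖ₑ * ∏ j, ‖f j (z.2 j)‖ₑ) (by fun_prop)
  have hnorm : ∀ j, (∫⁻ t, ‖f j t‖ₑ ^ p j ∂muHalf) ^ (1 / p j)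
      = eLpNorm (f j) (ENNReal.ofReal (p j)) muHalf := fun j => by
    rw [eLpNorm_eq_lintegral_rpow_enorm_toReal (by simpa using hp j) ofReal_ne_top,
      toReal_ofReal (hp j).le]
  have hbound : (∫⁻ x, I x ^ q ∂muHalf) ^ (1 / q)
      ≤ Theta m Q p * ∏ j, eLpNorm (f j) (ENNReal.ofReal (p j)) muHalf := by
    simpa only [hI, hnorm] using
      lintegral_rpow_lintegral_enorm_le hQmeas hhom hp hq hqp fun j => (hfm j).enorm
  have hIq : ∫⁻ x, I x ^ q ∂muHalf < ∞ := by
    refine (rpow_lt_top_iff_of_pos (one_div_pos.2 hq0)).1 (hbound.trans_lt ?_)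
    exact mul_lt_top hTheta (ENNReal.prod_lt_top fun j _ => (hf j).eLpNorm_lt_top)
  refine ⟨?_, ?_⟩
  · filter_upwards [ae_lt_top (hImeas.pow_const q) hIq.ne] with x hx
    exact ⟨(by fun_prop : Measurable fun xs => Q x xs * ∏ j, f j (xs j)).aestronglyMeasurable,
      (rpow_lt_top_iff_of_pos hq0).1 hx⟩
  · rw [eLpNorm_eq_lintegral_rpow_enorm_toReal (by simpa using hq0) ofReal_ne_top,
      toReal_ofReal hq0.le]
    refine le_trans ?_ hbound
    gcongr with x
    exact enorm_integral_le_lintegral_enorm _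

/-- If `Q` is homogeneous of degree `-m` and `Θ_m(p⃗) < ∞`, then the multilinear operator
`M(f⃗)(x) = ∫_{ℝ₊^m} Q(x,x⃗) ∏ fⱼ(xⱼ) dx⃗` is well defined a.e. and
`‖M(f⃗)‖_{L^p} ≤ Θ_m(p⃗) ∏ ‖fⱼ‖_{L^{pⱼ}}` where `1/p = ∑ 1/pⱼ`. -/
theorem stmt2 (m : ℕ) (Q : ℝ → (Fin m → ℝ) → ℝ)
    (hQmeas : Measurable (fun z : ℝ × (Fin m → ℝ) => Q z.1 z.2))
    (hhom : ∀ δ > (0:ℝ), ∀ x > (0:ℝ), ∀ xs : Fin m → ℝ, (∀ j, 0 < xs j) →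
      Q (δ * x) (fun j => δ * xs j) = δ ^ (-(m:ℝ)) * Q x xs)
    (p : Fin m → ℝ) (hp : ∀ j, 1 ≤ p j)
    (hTheta : Theta m Q p < ∞)
    (q : ℝ) (hq : 1 ≤ q) (hqp : 1 / q = ∑ j, 1 / p j)
    (f : Fin m → ℝ → ℝ) (hf : ∀ j, MemLp (f j) (ENNReal.ofReal (p j)) muHalf) :
    (∀ᵐ x ∂muHalf, Integrable (fun xs => Q x xs * ∏ j, f j (xs j)) (piHalf m)) ∧
    eLpNorm (fun x => ∫ xs, Q x xs * ∏ j, f j (xs j) ∂(piHalf m))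
        (ENNReal.ofReal q) muHalf
      ≤ Theta m Q p * ∏ j, eLpNorm (f j) (ENNReal.ofReal (p j)) muHalf := by
  set g : Fin m → ℝ → ℝ := fun j => (hf j).1.mk (f j)
  have hfg : ∀ j, f j =ᵐ[muHalf] g j := fun j => (hf j).1.ae_eq_mk
  have hkernel : ∀ x, (fun xs => Q x xs * ∏ j, g j (xs j))
      =ᵐ[piHalf m] fun xs => Q x xs * ∏ j, f j (xs j) := fun x => by
    filter_upwards [ae_all_iff.2 fun j =>
      (hfg j).comp_tendsto (Measure.tendsto_eval_ae_ae (i := j))] with xs hxs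
    simp only [Function.comp_apply] at hxs
    simp only [hxs]
  obtain ⟨hint, hnorm⟩ := ae_integrable_and_eLpNorm_le_of_measurable m Q hQmeas hhom p
    (fun j => zero_lt_one.trans_le (hp j)) hTheta q hq hqp g
    (fun j => (hf j).1.stronglyMeasurable_mk.measurable) fun j => (hf j).ae_eq (hfg j)
  refine ⟨hint.mono fun x hx => hx.congr (hkernel x), ?_⟩
  simpa only [integral_congr_ae (hkernel _), eLpNorm_congr_ae (hfg _)] using hnorm
end

section
/- Let f be a measurable function on a σ-finite measure space with ‖f‖_{Gψ} = 1, where ψ is a generating function on [a,b). Define h(p) = p ln ψ(p) and its Young–Fenchel transform h*(v) = sup_{p ∈ [a,b)} (pv − p ln ψ(p)). Then the tail function T_f(t) = μ{ω : |f(ω)| ≥ t} satisfies T_f(t) ≤ exp(−h*(ln t)) for all t ≥ e. -/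
/-!
Membership in the unit ball of `Gψ` gives `‖f‖_p ≤ ψ(p)` for every `p ∈ [a, b)`, so Markov's
inequality yields `T_f(t) ≤ (ψ(p)/t)^p = exp(-(p ln t - p ln ψ(p)))` for each such `p`.
Taking the infimum over `p` of the right-hand side turns the exponent into `-h*(ln t)`.
-/

open MeasureTheory ENNReal Set

/-- The Grand Lebesgue norm `‖f‖_{Gψ} = sup_{p ∈ [a,b)} ‖f‖_{L^p(μ)}/ψ(p)`. -/
noncomputable def grandNorm {Ω : Type*} [MeasurableSpace Ω] (μ : Measure Ω)
    (a : ℝ) (b : ℝ≥0∞) (ψ : ℝ → ℝ) (f : Ω → ℝ) : ℝ≥0∞ :=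
  ⨆ p : {p : ℝ // a ≤ p ∧ (ENNReal.ofReal p) < b},
    eLpNorm f (ENNReal.ofReal p.1) μ / ENNReal.ofReal (ψ p.1)

theorem meas_abs_ge_le_div_rpow_of_eLpNorm_le {Ω : Type*} [MeasurableSpace Ω] {μ : Measure Ω}
    {f : Ω → ℝ} (hf : AEStronglyMeasurable f μ) {p t C : ℝ} (hp : 0 < p) (ht : 0 < t) (hC : 0 ≤ C)
    (hfC : eLpNorm f (ENNReal.ofReal p) μ ≤ ENNReal.ofReal C) :
    μ {ω | t ≤ |f ω|} ≤ ENNReal.ofReal ((C / t) ^ p) := by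
  have hmarkov := meas_ge_le_mul_pow_eLpNorm_enorm μ (p := ENNReal.ofReal p) (by simpa)
    ofReal_ne_top hf (ε := ENNReal.ofReal t) (by simpa) (by simp)
  calc μ {ω | t ≤ |f ω|} = μ {ω | ENNReal.ofReal t ≤ ‖f ω‖ₑ} := by
        simp only [Real.enorm_eq_ofReal_abs, ofReal_le_ofReal_iff (abs_nonneg _)]
    _ ≤ (ENNReal.ofReal t)⁻¹ ^ p * eLpNorm f (ENNReal.ofReal p) μ ^ p := by
        simpa [toReal_ofReal hp.le] using hmarkov
    _ ≤ (ENNReal.ofReal t)⁻¹ ^ p * ENNReal.ofReal C ^ p := by gcongr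
    _ = ENNReal.ofReal ((C / t) ^ p) := by
        rw [← ofReal_rpow_of_nonneg (div_nonneg hC ht.le) hp.le, ofReal_div_of_pos ht,
          div_eq_mul_inv, mul_rpow_of_nonneg _ _ hp.le, inv_rpow, mul_comm]

theorem eLpNorm_le_grandNorm_mul {Ω : Type*} [MeasurableSpace Ω] (μ : Measure Ω) {a : ℝ}
    {b : ℝ≥0∞} (ψ : ℝ → ℝ) (f : Ω → ℝ) {p : ℝ} (hpa : a ≤ p) (hpb : ENNReal.ofReal p < b)
    (hψ : 0 < ψ p) :
    eLpNorm f (ENNReal.ofReal p) μ ≤ grandNorm μ a b ψ f * ENNReal.ofReal (ψ p) :=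
  (ENNReal.div_le_iff_le_mul (Or.inl (by simpa)) (Or.inl ofReal_ne_top)).1 <|
    le_iSup (fun q : {p : ℝ // a ≤ p ∧ ENNReal.ofReal p < b} ↦
      eLpNorm f (ENNReal.ofReal q.1) μ / ENNReal.ofReal (ψ q.1)) ⟨p, hpa, hpb⟩

theorem le_ofReal_exp_neg_iSup {ι : Type*} [Nonempty ι] {m : ℝ≥0∞} {g : ι → ℝ}
    (h : ∀ i, m ≤ ENNReal.ofReal (Real.exp (-g i))) :
    m ≤ ENNReal.ofReal (Real.exp (-⨆ i, g i)) := by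
  rcases eq_or_ne m 0 with rfl | hm0
  · exact zero_le
  have hm_top : m ≠ ∞ := ne_top_of_le_ne_top ofReal_ne_top (h (Classical.arbitrary ι))
  have hm_pos : 0 < m.toReal := toReal_pos hm0 hm_top
  have hg : ∀ i, g i ≤ -Real.log m.toReal := fun i ↦ by
    have hi := h i
    rw [← ofReal_toReal hm_top, ofReal_le_ofReal_iff (Real.exp_pos _).le,
      ← Real.log_le_iff_le_exp hm_pos] at hi
    linarith
  rw [← ofReal_toReal hm_top]
  refine ofReal_le_ofReal ((Real.log_le_iff_le_exp hm_pos).1 ?_)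
  linarith [ciSup_le hg]

theorem stmt9_general {Ω : Type*} [MeasurableSpace Ω] (μ : Measure Ω)
    (a : ℝ) (b : ℝ≥0∞) (ha : 1 ≤ a) (hab : ENNReal.ofReal a < b)
    (ψ : ℝ → ℝ) (hψpos : ∃ c > (0:ℝ), ∀ p, a ≤ p → (ENNReal.ofReal p) < b → c ≤ ψ p)
    (f : Ω → ℝ) (hfm : AEStronglyMeasurable f μ)
    (hf : grandNorm μ a b ψ f = 1) :
    ∀ t : ℝ, Real.exp 1 ≤ t →
      μ {ω | t ≤ |f ω|} ≤ ENNReal.ofReal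
        (Real.exp (-(⨆ p : {p : ℝ // a ≤ p ∧ (ENNReal.ofReal p) < b},
          (p.1 * Real.log t - p.1 * Real.log (ψ p.1))))) := by
  intro t ht
  obtain ⟨c, hc0, hc⟩ := hψpos
  have ht0 : 0 < t := (Real.exp_pos 1).trans_le ht
  have : Nonempty {p : ℝ // a ≤ p ∧ ENNReal.ofReal p < b} := ⟨⟨a, le_rfl, hab⟩⟩
  refine le_ofReal_exp_neg_iSup fun ⟨p, hpa, hpb⟩ ↦ ?_
  have hψ : 0 < ψ p := hc0.trans_le (hc p hpa hpb)
  have hLp : eLpNorm f (ENNReal.ofReal p) μ ≤ ENNReal.ofReal (ψ p) := by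
    simpa [hf] using eLpNorm_le_grandNorm_mul μ ψ f hpa hpb hψ
  calc μ {ω | t ≤ |f ω|} ≤ ENNReal.ofReal ((ψ p / t) ^ p) :=
        meas_abs_ge_le_div_rpow_of_eLpNorm_le hfm (by linarith) ht0 hψ.le hLp
    _ = ENNReal.ofReal (Real.exp (-(p * Real.log t - p * Real.log (ψ p)))) := by
        rw [Real.rpow_def_of_pos (div_pos hψ ht0), Real.log_div hψ.ne' ht0.ne']
        ring_nf

/-- If `‖f‖_{Gψ} = 1`, then the tail function satisfies
`μ{|f| ≥ t} ≤ exp(−h*(ln t))` for `t ≥ e`, where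
`h*(v) = sup_{p ∈ [a,b)} (pv − p ln ψ(p))` is the Young–Fenchel transform of
`h(p) = p ln ψ(p)`. -/
theorem stmt9 {Ω : Type*} [MeasurableSpace Ω] (μ : Measure Ω) [SigmaFinite μ]
    (a : ℝ) (b : ℝ≥0∞) (ha : 1 ≤ a) (hab : ENNReal.ofReal a < b)
    (ψ : ℝ → ℝ) (hψpos : ∃ c > (0:ℝ), ∀ p, a ≤ p → (ENNReal.ofReal p) < b → c ≤ ψ p)
    (f : Ω → ℝ) (hfm : AEStronglyMeasurable f μ)
    (hf : grandNorm μ a b ψ f = 1) :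
    ∀ t : ℝ, Real.exp 1 ≤ t →
      μ {ω | t ≤ |f ω|} ≤ ENNReal.ofReal
        (Real.exp (-(⨆ p : {p : ℝ // a ≤ p ∧ (ENNReal.ofReal p) < b},
          (p.1 * Real.log t - p.1 * Real.log (ψ p.1))))) :=
  stmt9_general μ a b ha hab ψ hψpos f hfm hf
end
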